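/- arXiv:2306.11521 — 4 statements merged into one kernel-verified Lean document; each statement's English description precedes it below -/
import Mathlib

section
/- Let k, n, N be positive integers. Let Ψ be a k-jet of a map from ℂ^n to ℂ^N (an N-tuple of polynomials in ℂ[x_1,…,x_n] of total degree ≤ k with zero constant term) whose linear part Ψ¹ : ℂ^n → ℂ^N has a one-dimensional kernel. Let γ and δ be regular k-jets of curves in ℂ^n such that Ψ∘γ = 0 up to order k and Ψ∘δ = 0 up to order k. Then there exists a polynomial φ ∈ ℂ[t] of degree ≤ k with φ(0) = 0 and nonzero coefficient of t, such that each component of γ is congruent to the corresponding component of δ∘φ modulo t^{k+1}. -/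
open Polynomial

lemma ms1 {R ι : Type*} [CommRing R] (z : R) (a b : ι → R)
    (h : ∀ j, z ∣ a j - b j) (s : Multiset ι) :
    z ∣ (s.map a).prod - (s.map b).prod := by
  induction s using Multiset.induction with
  | empty => simp
  | cons i s ih =>
    have heq : (Multiset.map a (i ::ₘ s)).prod - (Multiset.map b (i ::ₘ s)).prod
        = (a i - b i) * (s.map a).prod + b i * ((s.map a).prod - (s.map b).prod) := by
      simp [Multiset.map_cons, Multiset.prod_cons]; ring
    rw [heq]
    exact dvd_add (Dvd.dvd.mul_right (h i) _) (Dvd.dvd.mul_left ih _)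

lemma ms2 {R ι : Type*} [CommRing R] (z w : R) (a b : ι → R)
    (h : ∀ j, z ∣ a j - b j) (ha : ∀ j, w ∣ a j) (hb : ∀ j, w ∣ b j)
    (s : Multiset ι) (hs : 2 ≤ Multiset.card s) :
    z * w ∣ (s.map a).prod - (s.map b).prod := by
  induction s using Multiset.induction with
  | empty => simp at hs
  | cons i s ih =>
    have hs1 : s ≠ 0 := by rintro rfl; simp at hs
    obtain ⟨x, hx⟩ := Multiset.exists_mem_of_ne_zero hs1
    have heq : (Multiset.map a (i ::ₘ s)).prod - (Multiset.map b (i ::ₘ s)).prod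
        = (a i - b i) * (s.map a).prod + b i * ((s.map a).prod - (s.map b).prod) := by
      simp [Multiset.map_cons, Multiset.prod_cons]; ring
    rw [heq]
    apply dvd_add
    · exact mul_dvd_mul (h i) ((ha x).trans (Multiset.dvd_prod (Multiset.mem_map_of_mem a hx)))
    · rw [mul_comm z w]
      exact mul_dvd_mul (hb i) (ms1 z a b h s)

lemma prod_toMultiset {ι : Type*} [DecidableEq ι] (d : ι →₀ ℕ) (a : ι → Polynomial ℂ) :
    (Finsupp.toMultiset d |>.map a).prod = d.prod fun i k => a i ^ k := by
  induction d using Finsupp.induction with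
  | zero => simp
  | single_add j b f hjf hb ih =>
    rw [Finsupp.toMultiset_add, Multiset.map_add, Multiset.prod_add, ih,
      Finsupp.toMultiset_single, Finsupp.prod_add_index (by simp) (by intros; rw [pow_add]),
      Finsupp.prod_single_index (by simp), Multiset.map_nsmul, Multiset.prod_nsmul]
    simp

lemma main_mv {n : ℕ} (P : MvPolynomial (Fin n) ℂ) (a b : Fin n → Polynomial ℂ)
    (ha : ∀ j, X ∣ a j) (hb : ∀ j, X ∣ b j) (r : ℕ) (hd : ∀ j, X ^ r ∣ a j - b j) :
    X ^ (r + 1) ∣ MvPolynomial.aeval a P - MvPolynomial.aeval b P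
      - ∑ j, C (MvPolynomial.coeff (Finsupp.single j 1) P) * (a j - b j) := by
  induction P using MvPolynomial.induction_on' with
  | add p q hp hq =>
    have heq : MvPolynomial.aeval a (p + q) - MvPolynomial.aeval b (p + q)
        - ∑ j, C (MvPolynomial.coeff (Finsupp.single j 1) (p + q)) * (a j - b j)
        = (MvPolynomial.aeval a p - MvPolynomial.aeval b p
            - ∑ j, C (MvPolynomial.coeff (Finsupp.single j 1) p) * (a j - b j))
          + (MvPolynomial.aeval a q - MvPolynomial.aeval b q
            - ∑ j, C (MvPolynomial.coeff (Finsupp.single j 1) q) * (a j - b j)) := by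
      simp [MvPolynomial.coeff_add, map_add, add_mul, Finset.sum_add_distrib]
      ring
    rw [heq]; exact dvd_add hp hq
  | monomial d c =>
    rw [MvPolynomial.aeval_monomial, MvPolynomial.aeval_monomial,
      ← prod_toMultiset, ← prod_toMultiset]
    by_cases hd0 : d = 0
    · subst hd0
      have hsum : ∑ j, C (MvPolynomial.coeff (Finsupp.single j 1)
            ((MvPolynomial.monomial (0 : Fin n →₀ ℕ)) c)) * (a j - b j) = 0 := by
        apply Finset.sum_eq_zero
        intro j _
        rw [MvPolynomial.coeff_monomial, if_neg (by simp [eq_comm, Finsupp.single_eq_zero]),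
          map_zero, zero_mul]
      rw [hsum]
      simp
    by_cases hd1 : ∃ i, d = Finsupp.single i 1
    · obtain ⟨i, rfl⟩ := hd1
      have hsum : ∑ j, C (MvPolynomial.coeff (Finsupp.single j 1)
            ((MvPolynomial.monomial (Finsupp.single i 1)) c)) * (a j - b j)
          = C c * (a i - b i) := by
        rw [Finset.sum_eq_single i]
        · simp [MvPolynomial.coeff_monomial]
        · intro j _ hji
          rw [MvPolynomial.coeff_monomial, if_neg, map_zero, zero_mul]
          exact fun h => hji ((Finsupp.single_left_inj one_ne_zero).mp h.symm)
        · simp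
      rw [hsum]
      have : (algebraMap ℂ (Polynomial ℂ)) c * (Finsupp.toMultiset (Finsupp.single i 1) |>.map a).prod
          - (algebraMap ℂ (Polynomial ℂ)) c * (Finsupp.toMultiset (Finsupp.single i 1) |>.map b).prod
          - C c * (a i - b i) = 0 := by
        rw [Finsupp.toMultiset_single]
        simp [algebraMap_eq]
        ring
      rw [this]
      exact dvd_zero _
    · have hcard : 2 ≤ Multiset.card (Finsupp.toMultiset d) := by
        rcases Nat.lt_or_ge (Multiset.card (Finsupp.toMultiset d)) 2 with h | h
        · interval_cases hc : Multiset.card (Finsupp.toMultiset d)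
          · have h0 := Multiset.card_eq_zero.mp hc
            exact absurd (by simpa using congrArg Multiset.toFinsupp h0) hd0
          · obtain ⟨i, hi⟩ := Multiset.card_eq_one.mp hc
            refine absurd ⟨i, ?_⟩ hd1
            have := congrArg Multiset.toFinsupp hi
            simpa [Multiset.toFinsupp_singleton] using this
        · exact h
      have hsum : ∑ j, C (MvPolynomial.coeff (Finsupp.single j 1)
            ((MvPolynomial.monomial d) c)) * (a j - b j) = 0 := by
        apply Finset.sum_eq_zero
        intro j _
        rw [MvPolynomial.coeff_monomial, if_neg (fun h => hd1 ⟨j, h⟩), map_zero, zero_mul]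
      rw [hsum, sub_zero, ← mul_sub, pow_succ]
      exact Dvd.dvd.mul_left (ms2 (X ^ r) X a b hd ha hb _ hcard) _

lemma main_one (p a b : Polynomial ℂ) (ha : X ∣ a) (hb : X ∣ b) (r : ℕ) (hd : X ^ r ∣ a - b) :
    X ^ (r + 1) ∣ p.comp a - p.comp b - C (p.coeff 1) * (a - b) := by
  induction p using Polynomial.induction_on' with
  | add p q hp hq =>
    have heq : (p + q).comp a - (p + q).comp b - C ((p + q).coeff 1) * (a - b)
        = (p.comp a - p.comp b - C (p.coeff 1) * (a - b))
          + (q.comp a - q.comp b - C (q.coeff 1) * (a - b)) := by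
      simp [add_comp, coeff_add, map_add]; ring
    rw [heq]; exact dvd_add hp hq
  | monomial d c =>
    rw [monomial_comp, monomial_comp, coeff_monomial]
    match d with
    | 0 => simp
    | 1 => simp; ring_nf; simp
    | (e+2) =>
      rw [if_neg (by omega), map_zero, zero_mul, sub_zero]
      have hgeo := geom_sum₂_mul a b (e + 2)
      have heq : C c * a ^ (e + 2) - C c * b ^ (e + 2)
          = C c * ((∑ i ∈ Finset.range (e + 2), a ^ i * b ^ (e + 2 - 1 - i)) * (a - b)) := by
        rw [hgeo]; ring
      rw [heq]
      apply Dvd.dvd.mul_left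
      rw [pow_succ, mul_comm (X ^ r) X]
      apply mul_dvd_mul _ hd
      apply Finset.dvd_sum
      intro i hi
      rcases Nat.eq_zero_or_pos i with h0 | h0
      · subst h0
        exact dvd_mul_of_dvd_right (hb.trans (dvd_pow_self b (by omega))) _
      · exact (ha.trans (dvd_pow_self a (by omega))).mul_right _

lemma const_dvd_aeval {n : ℕ} (P : MvPolynomial (Fin n) ℂ) (g : Fin n → Polynomial ℂ)
    (hg : ∀ j, X ∣ g j) :
    X ∣ MvPolynomial.aeval g P - C (MvPolynomial.coeff 0 P) := by
  induction P using MvPolynomial.induction_on' with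
  | add p q hp hq =>
    have heq : MvPolynomial.aeval g (p + q) - C (MvPolynomial.coeff 0 (p + q))
        = (MvPolynomial.aeval g p - C (MvPolynomial.coeff 0 p))
          + (MvPolynomial.aeval g q - C (MvPolynomial.coeff 0 q)) := by
      simp [map_add, MvPolynomial.coeff_add]; ring
    rw [heq]; exact dvd_add hp hq
  | monomial d c =>
    rw [MvPolynomial.aeval_monomial, MvPolynomial.coeff_monomial]
    by_cases hd0 : d = 0
    · subst hd0; simp [algebraMap_eq]
    · rw [if_neg hd0, map_zero, sub_zero]
      obtain ⟨i, hi⟩ : ∃ i, i ∈ d.support := by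
        by_contra h
        push_neg at h
        exact hd0 (Finsupp.support_eq_empty.mp (Finset.eq_empty_iff_forall_notMem.mpr h))
      apply Dvd.dvd.mul_left
      refine ((hg i).trans (dvd_pow_self (g i) (Finsupp.mem_support_iff.mp hi))).trans ?_
      exact Finset.dvd_prod_of_mem _ hi

lemma pow_dvd_comp (p φ : Polynomial ℂ) (r : ℕ) (hp : X ^ r ∣ p) (hφ : X ∣ φ) :
    X ^ r ∣ p.comp φ := by
  obtain ⟨h, rfl⟩ := hp
  rw [mul_comp, X_pow_comp]
  exact (pow_dvd_pow_of_dvd hφ r).mul_right _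

/-- If `Ψ` is a `k`-jet of a map `ℂ^n → ℂ^N` whose linear part has one-dimensional kernel,
and `γ, δ` are regular `k`-jets of curves with `Ψ∘γ = 0` and `Ψ∘δ = 0` up to order `k`, then
`γ = δ∘φ` modulo `t^{k+1}` for some reparametrisation `φ ∈ Diff_k(1)`. -/
theorem stmt8 (k n N : ℕ) (hk : 1 ≤ k) (hn : 1 ≤ n) (hN : 1 ≤ N)
    (Ψ : Fin N → MvPolynomial (Fin n) ℂ)
    (hdeg : ∀ q, (Ψ q).totalDegree ≤ k)
    (hconst : ∀ q, MvPolynomial.coeff 0 (Ψ q) = 0)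
    (hker : Module.finrank ℂ
      (LinearMap.ker (Matrix.mulVecLin
        (Matrix.of fun (q : Fin N) (j : Fin n) =>
          MvPolynomial.coeff (Finsupp.single j 1) (Ψ q)))) = 1)
    (γ δ : Fin n → Polynomial ℂ)
    (hγdeg : ∀ j, (γ j).natDegree ≤ k) (hγ0 : ∀ j, (γ j).coeff 0 = 0)
    (hγreg : (fun j => (γ j).coeff 1) ≠ 0)
    (hδdeg : ∀ j, (δ j).natDegree ≤ k) (hδ0 : ∀ j, (δ j).coeff 0 = 0)
    (hδreg : (fun j => (δ j).coeff 1) ≠ 0)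
    (hΨγ : ∀ q, ∀ m, 1 ≤ m → m ≤ k → (MvPolynomial.aeval γ (Ψ q)).coeff m = 0)
    (hΨδ : ∀ q, ∀ m, 1 ≤ m → m ≤ k → (MvPolynomial.aeval δ (Ψ q)).coeff m = 0) :
    ∃ φ : Polynomial ℂ, φ.natDegree ≤ k ∧ φ.coeff 0 = 0 ∧ φ.coeff 1 ≠ 0 ∧
      ∀ j, (Polynomial.X : Polynomial ℂ) ^ (k + 1) ∣ (γ j - (δ j).comp φ) := by
  classical
  set A : Matrix (Fin N) (Fin n) ℂ := Matrix.of fun (q : Fin N) (j : Fin n) =>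
    MvPolynomial.coeff (Finsupp.single j 1) (Ψ q) with hA
  set K := LinearMap.ker (Matrix.mulVecLin A) with hK
  -- membership in the kernel for jets annihilated by Ψ
  have hker_mem : ∀ (a : Fin n → Polynomial ℂ), (∀ j, (a j).coeff 0 = 0) →
      (∀ q m, 1 ≤ m → m ≤ k → (MvPolynomial.aeval a (Ψ q)).coeff m = 0) →
      (fun j => (a j).coeff 1) ∈ K := by
    intro a h0 hc
    rw [hK, LinearMap.mem_ker, Matrix.mulVecLin_apply]
    funext q
    have hmv := main_mv (Ψ q) a 0 (fun j => X_dvd_iff.mpr (h0 j)) (fun j => dvd_zero X) 1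
      (fun j => by rw [pow_one]; simpa using X_dvd_iff.mpr (h0 j))
    rw [X_pow_dvd_iff] at hmv
    have h2 := hmv 1 (by omega)
    have haev0 : MvPolynomial.aeval (0 : Fin n → Polynomial ℂ) (Ψ q) = 0 := by
      rw [MvPolynomial.aeval_zero]
      have : MvPolynomial.constantCoeff (Ψ q) = 0 := hconst q
      rw [this, map_zero]
    rw [haev0] at h2
    simp only [coeff_sub, sub_zero, finset_sum_coeff, coeff_C_mul, coeff_sub] at h2
    rw [hc q 1 le_rfl hk] at h2
    simp only [Pi.zero_apply, coeff_zero, sub_zero] at h2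
    have h3 : ∑ x, MvPolynomial.coeff (Finsupp.single x 1) (Ψ q) * (a x).coeff 1 = 0 := by
      simpa using h2
    have hsum : ∑ j, A q j * (a j).coeff 1 = 0 := by
      simpa [hA, Matrix.of_apply] using h3
    simpa [Matrix.mulVec, dotProduct] using hsum
  -- the kernel is spanned by the tangent of δ
  have hspan : ∀ w ∈ K, ∃ c : ℂ, ∀ j, w j = c * (δ j).coeff 1 := by
    have huker := hker_mem δ hδ0 hΨδ
    have hu : (⟨_, huker⟩ : K) ≠ 0 := by
      intro h
      apply hδreg
      simpa [Submodule.mk_eq_zero] using h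
    have h1 := (finrank_eq_one_iff_of_nonzero' _ hu).mp hker
    intro w hw
    obtain ⟨c, hc⟩ := h1 ⟨w, hw⟩
    refine ⟨c, fun j => ?_⟩
    have := congrArg (fun z : K => (z : Fin n → ℂ) j) hc
    simpa using this.symm
  -- main induction
  have key : ∀ m, 1 ≤ m → m ≤ k → ∃ φ : Polynomial ℂ, φ.natDegree ≤ m ∧ φ.coeff 0 = 0 ∧
      φ.coeff 1 ≠ 0 ∧ ∀ j, X ^ (m + 1) ∣ γ j - (δ j).comp φ := by
    intro m hm1
    induction m, hm1 using Nat.le_induction with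
    | base =>
      intro _
      obtain ⟨c, hc⟩ := hspan _ (hker_mem γ hγ0 hΨγ)
      have hcne : c ≠ 0 := by
        intro h
        apply hγreg
        funext j
        simpa [h] using hc j
      refine ⟨C c * X, (natDegree_C_mul_le c X).trans (by simp), by simp,
        by simpa using hcne, fun j => ?_⟩
      have h1 := main_one (δ j) (C c * X) 0 ⟨C c, mul_comm _ _⟩ (dvd_zero X) 1
        (by rw [pow_one, sub_zero]; exact ⟨C c, mul_comm _ _⟩)
      rw [comp_zero, ← coeff_zero_eq_eval_zero, hδ0 j, map_zero, sub_zero, sub_zero] at h1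
      have h2 : X ^ 2 ∣ γ j - C ((γ j).coeff 1) * X := by
        rw [X_pow_dvd_iff]
        intro d hd
        interval_cases d <;> simp [hγ0 j]
      have heq : γ j - (δ j).comp (C c * X)
          = (γ j - C ((γ j).coeff 1) * X)
            - ((δ j).comp (C c * X) - C ((δ j).coeff 1) * (C c * X)) := by
        rw [hc j, map_mul]; ring
      rw [heq]
      exact dvd_sub h2 h1
    | succ m hm1 ih =>
      intro hmk
      obtain ⟨φ, hφdeg, hφ0, hφ1, hφdvd⟩ := ih (by omega)
      set b : Fin n → Polynomial ℂ := fun j => (δ j).comp φ with hb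
      have hφX : X ∣ φ := X_dvd_iff.mpr hφ0
      have hbX : ∀ j, X ∣ b j := fun j => by
        have := pow_dvd_comp (δ j) φ 1 (by rw [pow_one]; exact X_dvd_iff.mpr (hδ0 j)) hφX
        rwa [pow_one] at this
      -- Ψ∘δ vanishes to order k, hence so does Ψ∘(δ∘φ)
      have hδfull : ∀ q, X ^ (k + 1) ∣ MvPolynomial.aeval δ (Ψ q) := by
        intro q
        rw [X_pow_dvd_iff]
        intro d hd
        rcases Nat.eq_zero_or_pos d with rfl | hd1
        · have hcd := const_dvd_aeval (Ψ q) δ (fun j => X_dvd_iff.mpr (hδ0 j))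
          rw [hconst q, map_zero, sub_zero, X_dvd_iff] at hcd
          exact hcd
        · exact hΨδ q d hd1 (by omega)
      have hbfull : ∀ q, X ^ (k + 1) ∣ MvPolynomial.aeval b (Ψ q) := by
        intro q
        have hcomp : MvPolynomial.aeval b (Ψ q) = ((MvPolynomial.aeval δ) (Ψ q)).comp φ := by
          have h := DFunLike.congr_fun (MvPolynomial.comp_aeval δ (Polynomial.aeval φ)) (Ψ q)
          exact h.symm
        rw [hcomp]
        exact pow_dvd_comp _ _ _ (hδfull q) hφX
      -- the (m+1)-st coefficient of the error lies in the kernel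
      have hwker : (fun j => (γ j - b j).coeff (m + 1)) ∈ K := by
        rw [hK, LinearMap.mem_ker, Matrix.mulVecLin_apply]
        funext q
        have hmv := main_mv (Ψ q) γ b (fun j => X_dvd_iff.mpr (hγ0 j)) hbX (m + 1) hφdvd
        rw [X_pow_dvd_iff] at hmv
        have h2 := hmv (m + 1) (by omega)
        simp only [coeff_sub, finset_sum_coeff, coeff_C_mul] at h2
        rw [hΨγ q (m + 1) (by omega) hmk] at h2
        have hbc : (MvPolynomial.aeval b (Ψ q)).coeff (m + 1) = 0 := by
          have := hbfull q
          rw [X_pow_dvd_iff] at this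
          exact this (m + 1) (by omega)
        rw [hbc] at h2
        have h3 : ∑ x, MvPolynomial.coeff (Finsupp.single x 1) (Ψ q) * (γ x - b x).coeff (m + 1) = 0 := by
          have h4 : ∑ x, MvPolynomial.coeff (Finsupp.single x 1) (Ψ q)
              * ((γ x).coeff (m + 1) - (b x).coeff (m + 1)) = 0 := by simpa using h2
          simpa [coeff_sub] using h4
        have hsum : ∑ j, A q j * (γ j - b j).coeff (m + 1) = 0 := by
          simpa [hA, Matrix.of_apply] using h3
        simpa [Matrix.mulVec, dotProduct] using hsum
      obtain ⟨s, hs⟩ := hspan _ hwker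
      refine ⟨φ + C s * X ^ (m + 1), ?_, ?_, ?_, fun j => ?_⟩
      · refine (natDegree_add_le _ _).trans (max_le (hφdeg.trans (by omega)) ?_)
        exact (natDegree_C_mul_le s _).trans (by simp)
      · simp [hφ0]
      · have : (C s * X ^ (m + 1)).coeff 1 = 0 := by
          rw [coeff_C_mul, coeff_X_pow, if_neg (by omega), mul_zero]
        rw [coeff_add, this, add_zero]
        exact hφ1
      · have haX : X ∣ φ + C s * X ^ (m + 1) := by
          rw [X_dvd_iff, coeff_add, hφ0, coeff_C_mul, coeff_X_pow, if_neg (by omega)]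
          simp
        have hsub : φ + C s * X ^ (m + 1) - φ = C s * X ^ (m + 1) := by ring
        have h1 := main_one (δ j) (φ + C s * X ^ (m + 1)) φ haX hφX (m + 1)
          (by rw [hsub]; exact Dvd.dvd.mul_left dvd_rfl _)
        rw [hsub] at h1
        have h2 : X ^ (m + 1 + 1) ∣ (γ j - b j) - C (s * (δ j).coeff 1) * X ^ (m + 1) := by
          rw [X_pow_dvd_iff]
          intro d hd
          rw [coeff_sub, coeff_C_mul, coeff_X_pow]
          rcases Nat.lt_or_ge d (m + 1) with hlt | hge
          · have hγb : (γ j - b j).coeff d = 0 := by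
              have := hφdvd j
              rw [X_pow_dvd_iff] at this
              exact this d hlt
            rw [hγb, if_neg (by omega), mul_zero, sub_zero]
          · have hdm : d = m + 1 := by omega
            subst hdm
            rw [if_pos rfl, mul_one, hs j, sub_self]
        have heq : γ j - (δ j).comp (φ + C s * X ^ (m + 1))
            = ((γ j - b j) - C (s * (δ j).coeff 1) * X ^ (m + 1))
              - ((δ j).comp (φ + C s * X ^ (m + 1)) - (δ j).comp φ
                - C ((δ j).coeff 1) * (C s * X ^ (m + 1))) := by
          rw [hb, map_mul]; ring
        rw [heq]
        exact dvd_sub h2 h1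
  obtain ⟨φ, h1, h2, h3, h4⟩ := key k hk le_rfl
  exact ⟨φ, h1, h2, h3, h4⟩
end

section
/- Let k, n, N, i be positive integers with i ≤ k. Let v_1,…,v_k ∈ ℂ^n with v_1 ≠ 0 and γ(t) = Σ_{m=1}^k v_m t^m. Let J_k(n,N) denote the ℂ-vector space of N-tuples of polynomials in ℂ[x_1,…,x_n] of total degree at most k with zero constant term, so dim_ℂ J_k(n,N) = N(C(n+k,k) − 1). Then the set S^{i,N}_γ = {Ψ ∈ J_k(n,N) : Ψ∘γ = 0 up to order i} is a linear subspace of J_k(n,N) of codimension exactly iN, i.e. dim_ℂ S^{i,N}_γ = N(C(n+k,k) − 1) − iN. -/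
/-! Auxiliary lemmas -/

lemma aux_pow_coeff_lt {p : Polynomial ℂ} (hp : p.coeff 0 = 0) {m r : ℕ} (h : r < m) :
    (p ^ m).coeff r = 0 := by
  obtain ⟨q, rfl⟩ := Polynomial.X_dvd_iff.mpr hp
  rw [mul_pow, Polynomial.coeff_X_pow_mul']
  simp [Nat.not_le.mpr h]

lemma aux_pow_coeff_eq {p : Polynomial ℂ} (hp : p.coeff 0 = 0) (m : ℕ) :
    (p ^ m).coeff m = (p.coeff 1) ^ m := by
  obtain ⟨q, rfl⟩ := Polynomial.X_dvd_iff.mpr hp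
  have h1 : ((Polynomial.X : Polynomial ℂ) * q).coeff 1 = q.coeff 0 := by
    simpa using Polynomial.coeff_X_mul q 0
  have h2 := Polynomial.coeff_X_pow_mul (q ^ m) m 0
  rw [zero_add] at h2
  rw [mul_pow, h2, h1, Polynomial.coeff_zero_eq_eval_zero, Polynomial.eval_pow,
    ← Polynomial.coeff_zero_eq_eval_zero]

/-- adding a slack coordinate turns `≤ k` into `= k` -/
def aux_consEquiv (n k : ℕ) :
    {d : Fin n → ℕ // ∑ j, d j ≤ k} ≃ {e : Fin (n + 1) → ℕ // ∑ j, e j = k} where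
  toFun d := ⟨Fin.cons (k - ∑ j, d.1 j) d.1, by
    rw [Fin.sum_univ_succ]
    simp only [Fin.cons_zero, Fin.cons_succ]
    have := d.2; omega⟩
  invFun e := ⟨Fin.tail e.1, by
    have h := e.2
    rw [Fin.sum_univ_succ] at h
    have : ∑ j : Fin n, e.1 j.succ ≤ k := by omega
    simpa [Fin.tail] using this⟩
  left_inv d := Subtype.ext (by simp)
  right_inv e := by
    refine Subtype.ext (funext fun j => ?_)
    refine Fin.cases ?_ (fun j' => ?_) j
    · have h := e.2
      rw [Fin.sum_univ_succ] at h
      simp only [Fin.cons_zero, Fin.tail]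
      omega
    · simp [Fin.cons_succ, Fin.tail]

noncomputable def aux_chainEquiv (n k : ℕ) :
    {d : Fin n →₀ ℕ // (d.sum fun _ e => e) ≤ k} ≃ Sym (Fin (n + 1)) k :=
  ((Finsupp.equivFunOnFinite.subtypeEquiv (fun d => by
      rw [Finsupp.sum_fintype]
      · exact Iff.rfl
      · intro _; rfl)).trans
    (aux_consEquiv n k)).trans (Sym.equivNatSumOfFintype (Fin (n + 1)) k).symm

lemma aux_card_T (n k : ℕ) :
    Nat.card {d : Fin n →₀ ℕ | (d.sum fun _ e => e) ≤ k} = (n + k).choose k := by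
  have h : Nat.card {d : Fin n →₀ ℕ | (d.sum fun _ e => e) ≤ k}
      = Fintype.card (Sym (Fin (n + 1)) k) := by
    rw [← Nat.card_eq_fintype_card]
    exact Nat.card_congr (aux_chainEquiv n k)
  rw [h, Sym.card_sym_eq_choose]
  congr 1
  rw [Fintype.card_fin]
  omega

def auxSset (n k : ℕ) : Set (Fin n →₀ ℕ) := {d | d ≠ 0 ∧ (d.sum fun _ e => e) ≤ k}

lemma aux_finite_T (n k : ℕ) : Finite {d : Fin n →₀ ℕ // (d.sum fun _ e => e) ≤ k} :=
  Finite.of_equiv _ (aux_chainEquiv n k).symm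

lemma aux_finite_S (n k : ℕ) : Finite (auxSset n k) := by
  have : Finite ({d : Fin n →₀ ℕ | (d.sum fun _ e => e) ≤ k}) := aux_finite_T n k
  exact Finite.Set.subset {d : Fin n →₀ ℕ | (d.sum fun _ e => e) ≤ k} (fun d hd => hd.2)

lemma aux_card_S (n k : ℕ) : Nat.card (auxSset n k) = (n + k).choose k - 1 := by
  have hT : Finite ({d : Fin n →₀ ℕ | (d.sum fun _ e => e) ≤ k}) := aux_finite_T n k
  have h1 : auxSset n k = {d : Fin n →₀ ℕ | (d.sum fun _ e => e) ≤ k} \ {0} := by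
    ext d
    simp only [auxSset, Set.mem_setOf_eq, Set.mem_diff, Set.mem_singleton_iff]
    tauto
  rw [Nat.card_coe_set_eq, h1,
    Set.ncard_diff_singleton_of_mem (by simp),
    ← Nat.card_coe_set_eq, aux_card_T]

/-- `J_k(n,N)`: the space of `k`-jets of maps `ℂ^n → ℂ^N`, i.e. `N`-tuples of polynomials of
total degree at most `k` with zero constant term. -/
noncomputable def Jspace (k n N : ℕ) : Submodule ℂ (Fin N → MvPolynomial (Fin n) ℂ) where
  carrier := {Ψ | ∀ q, (Ψ q).totalDegree ≤ k ∧ MvPolynomial.coeff 0 (Ψ q) = 0}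
  add_mem' := by
    intro a b ha hb q
    constructor
    · exact le_trans (MvPolynomial.totalDegree_add _ _) (max_le (ha q).1 (hb q).1)
    · simp only [Pi.add_apply, MvPolynomial.coeff_add, (ha q).2, (hb q).2, add_zero]
  zero_mem' := by
    intro q
    simp
  smul_mem' := by
    intro c a ha q
    constructor
    · exact le_trans (MvPolynomial.totalDegree_smul_le _ _) (ha q).1
    · simp only [Pi.smul_apply, MvPolynomial.coeff_smul, (ha q).2, smul_zero]

/-- `S^{i,N}_γ`: the subspace of `J_k(n,N)` of jets `Ψ` with `Ψ∘γ = 0` up to order `i`. -/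
noncomputable def Sspace (k n N i : ℕ) (γ : Fin n → Polynomial ℂ) :
    Submodule ℂ (Fin N → MvPolynomial (Fin n) ℂ) :=
  Jspace k n N ⊓
    ⨅ (q : Fin N), ⨅ (m : Fin (i + 1)), ⨅ (_ : 1 ≤ (m : ℕ)),
      LinearMap.ker ((Polynomial.lcoeff ℂ (m : ℕ)) ∘ₗ
        (MvPolynomial.aeval γ).toLinearMap ∘ₗ (LinearMap.proj q))

set_option maxHeartbeats 1000000
set_option synthInstance.maxHeartbeats 200000
lemma aux_mem_restrictSupport {n k : ℕ} {p : MvPolynomial (Fin n) ℂ} :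
    p ∈ MvPolynomial.restrictSupport ℂ (auxSset n k) ↔
      p.totalDegree ≤ k ∧ MvPolynomial.coeff 0 p = 0 := by
  rw [MvPolynomial.mem_restrictSupport_iff]
  constructor
  · intro h
    constructor
    · rw [MvPolynomial.totalDegree, Finset.sup_le_iff]
      exact fun d hd => (h hd).2
    · by_contra h0
      exact (h (MvPolynomial.mem_support_iff.mpr h0)).1 rfl
  · rintro ⟨h1, h2⟩ d hd
    refine ⟨?_, ?_⟩
    · rintro rfl
      exact (MvPolynomial.mem_support_iff.mp hd) h2
    · exact le_trans (MvPolynomial.le_totalDegree (Finset.mem_coe.mp hd)) h1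

noncomputable instance aux_finV1 (n k : ℕ) :
    Module.Finite ℂ (MvPolynomial.restrictSupport ℂ (auxSset n k)) := by
  have : Finite (auxSset n k) := aux_finite_S n k
  have : Fintype (auxSset n k) := Fintype.ofFinite _
  exact Module.Finite.of_basis (MvPolynomial.basisRestrictSupport ℂ _)

lemma aux_finrank_V1 (n k : ℕ) :
    Module.finrank ℂ (MvPolynomial.restrictSupport ℂ (auxSset n k))
      = (n + k).choose k - 1 := by
  have : Finite (auxSset n k) := aux_finite_S n k
  have : Fintype (auxSset n k) := Fintype.ofFinite _
  rw [Module.finrank_eq_card_basis (MvPolynomial.basisRestrictSupport ℂ (auxSset n k)),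
    ← Nat.card_eq_fintype_card, aux_card_S]

noncomputable def aux_JspaceEquiv (k n N : ℕ) :
    (Jspace k n N) ≃ₗ[ℂ] (Fin N → MvPolynomial.restrictSupport ℂ (auxSset n k)) where
  toFun Ψ q := ⟨Ψ.1 q, aux_mem_restrictSupport.mpr (Ψ.2 q)⟩
  map_add' _ _ := rfl
  map_smul' _ _ := rfl
  invFun f := ⟨fun q => (f q).1, fun q => aux_mem_restrictSupport.mp (f q).2⟩
  left_inv _ := rfl
  right_inv _ := rfl

instance aux_finJ (k n N : ℕ) : Module.Finite ℂ (Jspace k n N) :=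
  Module.Finite.equiv (aux_JspaceEquiv k n N).symm

lemma aux_finrank_J (k n N : ℕ) :
    Module.finrank ℂ (Jspace k n N) = N * ((n + k).choose k - 1) := by
  rw [LinearEquiv.finrank_eq (aux_JspaceEquiv k n N), Module.finrank_pi_fintype,
    Finset.sum_congr rfl (fun q _ => aux_finrank_V1 n k), Finset.sum_const,
    Finset.card_univ, Fintype.card_fin, smul_eq_mul]

noncomputable def auxLmap (n N i : ℕ) (γ : Fin n → Polynomial ℂ) :
    (Fin N → MvPolynomial (Fin n) ℂ) →ₗ[ℂ] (Fin N → Fin i → ℂ) :=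
  LinearMap.pi fun q => LinearMap.pi fun m =>
    (Polynomial.lcoeff ℂ ((m : ℕ) + 1)) ∘ₗ
      (MvPolynomial.aeval γ).toLinearMap ∘ₗ (LinearMap.proj q)

lemma auxLmap_apply (n N i : ℕ) (γ : Fin n → Polynomial ℂ)
    (x : Fin N → MvPolynomial (Fin n) ℂ) (q : Fin N) (m : Fin i) :
    auxLmap n N i γ x q m = (MvPolynomial.aeval γ (x q)).coeff ((m : ℕ) + 1) := rfl

lemma aux_Sspace_eq (k n N i : ℕ) (γ : Fin n → Polynomial ℂ) :
    Sspace k n N i γ = Jspace k n N ⊓ LinearMap.ker (auxLmap n N i γ) := by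
  ext x
  rw [Sspace, Submodule.mem_inf, Submodule.mem_inf]
  refine and_congr_right fun _ => ?_
  simp only [Submodule.mem_iInf, LinearMap.mem_ker, LinearMap.coe_comp, Function.comp_apply,
    LinearMap.proj_apply, AlgHom.toLinearMap_apply, Polynomial.lcoeff_apply]
  constructor
  · intro h
    funext q m
    have := h q ⟨(m : ℕ) + 1, by omega⟩ (by simp)
    simpa [auxLmap_apply] using this
  · intro h q m hm
    have h2 := congrFun (congrFun h q) ⟨(m : ℕ) - 1, by omega⟩
    rw [auxLmap_apply] at h2
    simp only [Pi.zero_apply] at h2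
    have h3 : ((⟨(m : ℕ) - 1, by omega⟩ : Fin i) : ℕ) + 1 = (m : ℕ) := by
      simp; omega
    rwa [h3] at h2

/-- For a regular curve `γ(t) = Σ_{m=1}^k v_m t^m` (with `v_1 ≠ 0`), the solution space
`S^{i,N}_γ = {Ψ ∈ J_k(n,N) : Ψ∘γ = 0 up to order i}` has codimension exactly `iN` in
`J_k(n,N)`, whose dimension is `N(C(n+k,k) - 1)`. -/
theorem stmt13 (k n N i : ℕ) (hk : 1 ≤ k) (hn : 1 ≤ n) (hN : 1 ≤ N)
    (hi : 1 ≤ i) (hik : i ≤ k)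
    (v : ℕ → (Fin n → ℂ)) (hv1 : v 1 ≠ 0) :
    Module.finrank ℂ (Jspace k n N) = N * (Nat.choose (n + k) k - 1) ∧
    Module.finrank ℂ
        (Sspace k n N i (fun j => ∑ m ∈ Finset.Icc 1 k,
          Polynomial.C (v m j) * Polynomial.X ^ m)) =
      N * (Nat.choose (n + k) k - 1) - i * N := by
  refine ⟨aux_finrank_J k n N, ?_⟩
  set γ : Fin n → Polynomial ℂ :=
    fun j => ∑ m ∈ Finset.Icc 1 k, Polynomial.C (v m j) * Polynomial.X ^ m with hγdef
  obtain ⟨j, hj⟩ : ∃ j, v 1 j ≠ 0 := Function.ne_iff.mp hv1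
  -- basic coefficients of γ j
  have hcoeff : ∀ r : ℕ, (γ j).coeff r = if r ∈ Finset.Icc 1 k then v r j else 0 := by
    intro r
    rw [hγdef]
    rw [Polynomial.finset_sum_coeff]
    simp only [Polynomial.coeff_C_mul, Polynomial.coeff_X_pow, mul_ite, mul_one, mul_zero]
    rw [Finset.sum_ite_eq (Finset.Icc 1 k) r (fun m => v m j)]
  have hg0 : (γ j).coeff 0 = 0 := by
    rw [hcoeff]; simp
  have hg1 : (γ j).coeff 1 = v 1 j := by
    rw [hcoeff]; simp [hk]
  -- the triangular matrix
  set M : Matrix (Fin i) (Fin i) ℂ :=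
    fun r m => ((γ j) ^ ((m : ℕ) + 1)).coeff ((r : ℕ) + 1) with hMdef
  have hMtri : M.BlockTriangular OrderDual.toDual := by
    intro r m hrm
    exact aux_pow_coeff_lt hg0 (by simpa using hrm)
  have hMdiag : ∀ m : Fin i, M m m = (v 1 j) ^ ((m : ℕ) + 1) := by
    intro m
    show ((γ j) ^ ((m : ℕ) + 1)).coeff ((m : ℕ) + 1) = _
    rw [aux_pow_coeff_eq hg0, hg1]
  have hdet : IsUnit M.det := by
    rw [Matrix.det_of_lowerTriangular M hMtri]
    rw [isUnit_iff_ne_zero]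
    exact Finset.prod_ne_zero_iff.mpr fun m _ => by
      rw [hMdiag]; exact pow_ne_zero _ hj
  -- surjectivity of the restricted map
  have hsurj : Function.Surjective ((auxLmap n N i γ).domRestrict (Jspace k n N)) := by
    intro c
    set d : Fin N → Fin i → ℂ := fun q => M⁻¹.mulVec (c q) with hddef
    set Ψ : Fin N → MvPolynomial (Fin n) ℂ :=
      fun q => ∑ m : Fin i, MvPolynomial.C (d q m) * MvPolynomial.X j ^ ((m : ℕ) + 1) with hΨdef
    have hΨJ : Ψ ∈ Jspace k n N := by
      intro q
      constructor
      · refine le_trans (MvPolynomial.totalDegree_finset_sum _ _) (Finset.sup_le fun m _ => ?_)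
        refine le_trans (MvPolynomial.totalDegree_mul _ _) ?_
        rw [MvPolynomial.totalDegree_C, MvPolynomial.totalDegree_X_pow]
        have := m.isLt
        omega
      · rw [MvPolynomial.coeff_sum]
        refine Finset.sum_eq_zero fun m _ => ?_
        simp [MvPolynomial.coeff_C_mul, MvPolynomial.coeff_X_pow, Finsupp.single_eq_zero]
    refine ⟨⟨Ψ, hΨJ⟩, ?_⟩
    funext q r
    have haev : MvPolynomial.aeval γ (Ψ q)
        = ∑ m : Fin i, Polynomial.C (d q m) * (γ j) ^ ((m : ℕ) + 1) := by
      rw [hΨdef]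
      rw [map_sum]
      refine Finset.sum_congr rfl fun m _ => ?_
      rw [map_mul, map_pow, MvPolynomial.aeval_C, MvPolynomial.aeval_X]
      rfl
    have : ((auxLmap n N i γ).domRestrict (Jspace k n N)) ⟨Ψ, hΨJ⟩ q r
        = (M.mulVec (d q)) r := by
      rw [LinearMap.domRestrict_apply, auxLmap_apply, haev, Polynomial.finset_sum_coeff]
      rw [Matrix.mulVec, dotProduct]
      refine Finset.sum_congr rfl fun m _ => ?_
      rw [Polynomial.coeff_C_mul, hMdef, mul_comm]
    rw [this, hddef, Matrix.mulVec_mulVec, Matrix.mul_nonsing_inv M hdet, Matrix.one_mulVec]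
  -- rank computations
  have hkerT : LinearMap.ker ((auxLmap n N i γ).domRestrict (Jspace k n N))
      = Submodule.comap (Jspace k n N).subtype
          (Jspace k n N ⊓ LinearMap.ker (auxLmap n N i γ)) := by
    rw [LinearMap.ker_domRestrict, Submodule.comap_inf, Submodule.comap_subtype_self, top_inf_eq]
  have heq := Submodule.comapSubtypeEquivOfLe
    (inf_le_left : Jspace k n N ⊓ LinearMap.ker (auxLmap n N i γ) ≤ Jspace k n N)
  have hrn := LinearMap.finrank_range_add_finrank_ker
    ((auxLmap n N i γ).domRestrict (Jspace k n N))
  have hrange : Module.finrank ℂ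
      (LinearMap.range ((auxLmap n N i γ).domRestrict (Jspace k n N))) = N * i := by
    rw [LinearMap.range_eq_top.mpr hsurj, finrank_top]
    rw [Module.finrank_pi_fintype]
    simp [Module.finrank_pi]
  have h1 : Module.finrank ℂ
      (Sspace k n N i γ) = Module.finrank ℂ
        (LinearMap.ker ((auxLmap n N i γ).domRestrict (Jspace k n N))) := by
    rw [aux_Sspace_eq, hkerT]
    exact (LinearEquiv.finrank_eq heq).symm
  rw [aux_finrank_J, hrange] at hrn
  rw [h1, mul_comm i N]
  omega
end

section
/- Let γ and δ be regular k-jets of curves in ℂ^n. Define the scalar solution space S_γ = {ψ ∈ ℂ[x_1,…,x_n] : deg ψ ≤ k, ψ(0) = 0, and ψ∘γ = 0 up to order k} and similarly S_δ. Then S_γ = S_δ if and only if there exists a polynomial φ ∈ ℂ[t] of degree ≤ k with φ(0) = 0 and nonzero coefficient of t such that each component of γ is congruent to the corresponding component of δ∘φ modulo t^{k+1}. (This expresses that the test curve map γ ↦ (S_γ)^⊥ is Diff_k(1)-invariant and injective on Diff_k(1)-orbits of regular jets.) -/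
/-- The scalar solution space `S_γ` of a `k`-jet of a curve `γ` in `ℂ^n`: polynomials
`ψ ∈ ℂ[x_1,…,x_n]` of degree at most `k` with zero constant term and `ψ∘γ = 0` up to
order `k`. -/
def solSpace (k n : ℕ) (γ : Fin n → Polynomial ℂ) : Set (MvPolynomial (Fin n) ℂ) :=
  {ψ | ψ.totalDegree ≤ k ∧ MvPolynomial.coeff 0 ψ = 0 ∧
    ∀ m, 1 ≤ m → m ≤ k → (MvPolynomial.aeval γ ψ).coeff m = 0}

open Polynomial

noncomputable section Stmt14Aux

abbrev Ik (k : ℕ) : Ideal (Polynomial ℂ) := Ideal.span {(X : Polynomial ℂ) ^ (k+1)}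
abbrev Rk (k : ℕ) := Polynomial ℂ ⧸ Ik k
def piQ (k : ℕ) : Polynomial ℂ →ₐ[ℂ] Rk k := Ideal.Quotient.mkₐ ℂ (Ik k)

lemma piQ_eq_zero_iff {k : ℕ} {p : Polynomial ℂ} :
    piQ k p = 0 ↔ (X : Polynomial ℂ)^(k+1) ∣ p := by
  rw [piQ, Ideal.Quotient.mkₐ_eq_mk, Ideal.Quotient.eq_zero_iff_mem, Ideal.mem_span_singleton]

lemma piQ_eq_iff {k : ℕ} {p q : Polynomial ℂ} :
    piQ k p = piQ k q ↔ (X : Polynomial ℂ)^(k+1) ∣ p - q := by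
  rw [piQ, Ideal.Quotient.mkₐ_eq_mk, Ideal.Quotient.eq, Ideal.mem_span_singleton]

lemma aeval_eq_comp (φ p : Polynomial ℂ) : Polynomial.aeval φ p = p.comp φ := by
  rw [Polynomial.aeval_def, Polynomial.comp, Polynomial.algebraMap_eq]

lemma coeff0_aeval {n : ℕ} (γ : Fin n → Polynomial ℂ) (hγ0 : ∀ j, (γ j).coeff 0 = 0)
    (ψ : MvPolynomial (Fin n) ℂ) :
    (MvPolynomial.aeval γ ψ).coeff 0 = MvPolynomial.coeff 0 ψ := by
  have h : (Polynomial.aeval (0:ℂ)).comp (MvPolynomial.aeval γ)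
      = MvPolynomial.aeval (fun j => Polynomial.aeval (0:ℂ) (γ j)) :=
    MvPolynomial.comp_aeval γ _
  have h2 : (fun j => Polynomial.aeval (0:ℂ) (γ j)) = (0 : Fin n → ℂ) := by
    funext j
    simp [Polynomial.aeval_def, Polynomial.eval₂_at_zero, hγ0 j]
  have h3 := congrArg (fun f => f ψ) h
  simp only [AlgHom.comp_apply, h2] at h3
  have h4 : Polynomial.eval 0 ((MvPolynomial.aeval γ) ψ) = Polynomial.aeval (0:ℂ) ((MvPolynomial.aeval γ) ψ) := by
    simp [Polynomial.aeval_def, Polynomial.eval]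
  rw [Polynomial.coeff_zero_eq_eval_zero, h4, h3, MvPolynomial.aeval_zero]
  rfl

lemma mem_solSpace_iff {k n : ℕ} {γ : Fin n → Polynomial ℂ} (hγ0 : ∀ j, (γ j).coeff 0 = 0)
    (ψ : MvPolynomial (Fin n) ℂ) :
    ψ ∈ solSpace k n γ ↔ ψ.totalDegree ≤ k ∧ MvPolynomial.coeff 0 ψ = 0 ∧
      (X : Polynomial ℂ)^(k+1) ∣ MvPolynomial.aeval γ ψ := by
  simp only [solSpace, Set.mem_setOf_eq, Polynomial.X_pow_dvd_iff]
  constructor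
  · rintro ⟨h1, h2, h3⟩
    refine ⟨h1, h2, fun d hd => ?_⟩
    rcases Nat.eq_zero_or_pos d with rfl | hd1
    · rw [coeff0_aeval γ hγ0]; exact h2
    · exact h3 d hd1 (Nat.lt_succ_iff.mp hd)
  · rintro ⟨h1, h2, h3⟩
    exact ⟨h1, h2, fun m hm1 hmk => h3 m (Nat.lt_succ_iff.mpr hmk)⟩

def truncK (k : ℕ) {n : ℕ} (ψ : MvPolynomial (Fin n) ℂ) : MvPolynomial (Fin n) ℂ :=
  ∑ d ∈ ψ.support.filter (fun d => (d.sum fun _ e => e) ≤ k),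
    MvPolynomial.monomial d (MvPolynomial.coeff d ψ)

lemma truncK_totalDegree {k n : ℕ} (ψ : MvPolynomial (Fin n) ℂ) :
    (truncK k ψ).totalDegree ≤ k := by
  refine le_trans (MvPolynomial.totalDegree_finset_sum _ _) (Finset.sup_le fun d hd => ?_)
  rw [Finset.mem_filter] at hd
  exact le_trans (MvPolynomial.totalDegree_monomial_le _ _) hd.2

lemma truncK_coeff0 {k n : ℕ} (ψ : MvPolynomial (Fin n) ℂ) :
    MvPolynomial.coeff 0 (truncK k ψ) = MvPolynomial.coeff 0 ψ := by
  rw [truncK]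
  rw [MvPolynomial.coeff_sum]
  by_cases h : MvPolynomial.coeff 0 ψ = 0
  · rw [h]
    refine Finset.sum_eq_zero fun d hd => ?_
    rw [Finset.mem_filter, MvPolynomial.mem_support_iff] at hd
    rw [MvPolynomial.coeff_monomial]
    by_cases hd0 : d = 0
    · subst hd0; exact if_pos rfl ▸ (by simpa using h)
    · exact if_neg hd0
  · rw [Finset.sum_eq_single (0 : Fin n →₀ ℕ)]
    · simp [MvPolynomial.coeff_monomial]
    · intro d hd hne
      rw [MvPolynomial.coeff_monomial]
      exact if_neg hne
    · intro h0
      exfalso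
      apply h0
      rw [Finset.mem_filter, MvPolynomial.mem_support_iff]
      exact ⟨h, by simp⟩

lemma X_pow_dvd_aeval_monomial {k n : ℕ} {γ : Fin n → Polynomial ℂ}
    (hγ0 : ∀ j, (γ j).coeff 0 = 0) {d : Fin n →₀ ℕ} (hd : ¬ (d.sum fun _ e => e) ≤ k)
    (c : ℂ) : (X : Polynomial ℂ)^(k+1) ∣ MvPolynomial.aeval γ (MvPolynomial.monomial d c) := by
  rw [MvPolynomial.aeval_monomial]
  refine Dvd.dvd.mul_left ?_ _
  have h1 : (X : Polynomial ℂ)^(d.sum fun _ e => e) ∣ d.prod fun j e => γ j ^ e := by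
    rw [Finsupp.sum, Finsupp.prod, ← Finset.prod_pow_eq_pow_sum]
    exact Finset.prod_dvd_prod_of_dvd _ _ fun j _ =>
      pow_dvd_pow_of_dvd (Polynomial.X_dvd_iff.mpr (hγ0 j)) _
  exact dvd_trans (pow_dvd_pow _ (by omega)) h1

lemma truncK_dvd {k n : ℕ} {γ : Fin n → Polynomial ℂ} (hγ0 : ∀ j, (γ j).coeff 0 = 0)
    (ψ : MvPolynomial (Fin n) ℂ) :
    (X : Polynomial ℂ)^(k+1) ∣ MvPolynomial.aeval γ (ψ - truncK k ψ) := by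
  have hsplit : ψ - truncK k ψ
      = ∑ d ∈ ψ.support.filter (fun d => ¬ (d.sum fun _ e => e) ≤ k),
        MvPolynomial.monomial d (MvPolynomial.coeff d ψ) := by
    have := Finset.sum_filter_add_sum_filter_not ψ.support
      (fun d => (d.sum fun _ e => e) ≤ k)
      (fun d => MvPolynomial.monomial d (MvPolynomial.coeff d ψ))
    rw [truncK, sub_eq_iff_eq_add, add_comm, this]
    exact ψ.as_sum
  rw [hsplit, map_sum]
  exact Finset.dvd_sum fun d hd =>
    X_pow_dvd_aeval_monomial hγ0 (Finset.mem_filter.mp hd).2 _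

def PhiA (k n : ℕ) (γ : Fin n → Polynomial ℂ) : MvPolynomial (Fin n) ℂ →ₐ[ℂ] Rk k :=
  (piQ k).comp (MvPolynomial.aeval γ)

lemma coeff0_pow (w : Polynomial ℂ) (m : ℕ) : (w^m).coeff 0 = (w.coeff 0)^m := by
  simp [Polynomial.coeff_zero_eq_eval_zero]

lemma aeval_approx {n : ℕ} (γ : Fin n → Polynomial ℂ) (hγ0 : ∀ j, (γ j).coeff 0 = 0)
    (j0 : Fin n) (hv : (γ j0).coeff 1 ≠ 0) (m : ℕ) (p : Polynomial ℂ) :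
    ∃ q : MvPolynomial (Fin n) ℂ, (X : Polynomial ℂ)^m ∣ p - MvPolynomial.aeval γ q := by
  induction m with
  | zero => exact ⟨0, by simp⟩
  | succ m ih =>
    obtain ⟨q, hq⟩ := ih
    obtain ⟨r, hr⟩ := hq
    obtain ⟨w, hw⟩ := Polynomial.X_dvd_iff.mpr (hγ0 j0)
    set v : ℂ := (γ j0).coeff 1 with hv_def
    have hw0 : w.coeff 0 = v := by
      rw [hv_def, hw, Polynomial.coeff_X_mul]
    set c : ℂ := r.coeff 0 with hc_def
    refine ⟨q + MvPolynomial.C (c / v^m) * (MvPolynomial.X j0)^m, ?_⟩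
    have haev : MvPolynomial.aeval γ (q + MvPolynomial.C (c / v^m) * (MvPolynomial.X j0)^m)
        = MvPolynomial.aeval γ q + Polynomial.C (c / v^m) * (γ j0)^m := by
      simp [MvPolynomial.algebraMap_eq]
    rw [haev]
    have key : p - (MvPolynomial.aeval γ q + Polynomial.C (c / v^m) * (γ j0)^m)
        = X^m * (r - Polynomial.C (c / v^m) * w^m) := by
      rw [mul_sub, ← hr, hw, mul_pow]
      ring
    rw [key, pow_succ]
    refine mul_dvd_mul_left _ (Polynomial.X_dvd_iff.mpr ?_)
    rw [Polynomial.coeff_sub, Polynomial.mul_coeff_zero, Polynomial.coeff_C_zero, coeff0_pow,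
      hw0, div_mul_cancel₀ _ (pow_ne_zero m hv)]
    simp [hc_def]

lemma PhiA_surjective {k n : ℕ} (γ : Fin n → Polynomial ℂ) (hγ0 : ∀ j, (γ j).coeff 0 = 0)
    (hγreg : (fun j => (γ j).coeff 1) ≠ 0) : Function.Surjective (PhiA k n γ) := by
  obtain ⟨j0, hv⟩ := Function.ne_iff.mp hγreg
  intro r
  obtain ⟨p, rfl⟩ := Ideal.Quotient.mk_surjective r
  obtain ⟨q, hq⟩ := aeval_approx γ hγ0 j0 (by simpa using hv) (k+1) p
  refine ⟨q, ?_⟩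
  show piQ k (MvPolynomial.aeval γ q) = _
  rw [show Ideal.Quotient.mk (Ik k) p = piQ k p from rfl, piQ_eq_iff]
  exact (dvd_sub_comm).mp hq

lemma comp_coeff0 (p φ : Polynomial ℂ) (h0 : φ.coeff 0 = 0) :
    (p.comp φ).coeff 0 = p.coeff 0 := by
  rw [Polynomial.coeff_zero_eq_eval_zero, Polynomial.eval_comp,
    ← Polynomial.coeff_zero_eq_eval_zero, h0, ← Polynomial.coeff_zero_eq_eval_zero]

lemma comp_dvd {φ : Polynomial ℂ} (h0 : φ.coeff 0 = 0) (h1 : φ.coeff 1 ≠ 0) (K : ℕ) :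
    ∀ p : Polynomial ℂ, (X : Polynomial ℂ)^K ∣ p.comp φ → (X : Polynomial ℂ)^K ∣ p := by
  induction K with
  | zero => intro p _; simpa using one_dvd p
  | succ K ih =>
    intro p h
    obtain ⟨r, hr⟩ := ih p (dvd_trans (pow_dvd_pow _ (Nat.le_succ K)) h)
    obtain ⟨w, hw⟩ := Polynomial.X_dvd_iff.mpr h0
    have hw0 : w.coeff 0 = φ.coeff 1 := by rw [hw, Polynomial.coeff_X_mul]
    have hcomp : p.comp φ = X^K * (w^K * r.comp φ) := by
      rw [hr, Polynomial.mul_comp, Polynomial.pow_comp, Polynomial.X_comp, hw, mul_pow]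
      ring
    rw [hcomp, pow_succ] at h
    have hXdvd : (X : Polynomial ℂ) ∣ w^K * r.comp φ :=
      (mul_dvd_mul_iff_left (pow_ne_zero K Polynomial.X_ne_zero)).mp h
    have hc0 : (w^K * r.comp φ).coeff 0 = 0 := Polynomial.X_dvd_iff.mp hXdvd
    rw [Polynomial.mul_coeff_zero, coeff0_pow, hw0, comp_coeff0 _ _ h0] at hc0
    have hr0 : r.coeff 0 = 0 := by
      rcases mul_eq_zero.mp hc0 with h' | h'
      · exact absurd h' (pow_ne_zero K h1)
      · exact h'
    obtain ⟨s, hs⟩ := Polynomial.X_dvd_iff.mpr hr0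
    exact ⟨s, by rw [hr, hs, pow_succ]; ring⟩

/-- Transfer of the divisibility condition along solution-space equality. -/
lemma ker_transfer {k n : ℕ} {α β : Fin n → Polynomial ℂ}
    (hα : ∀ j, (α j).coeff 0 = 0) (hβ : ∀ j, (β j).coeff 0 = 0)
    (hS : solSpace k n α = solSpace k n β) (ψ : MvPolynomial (Fin n) ℂ)
    (hψ : (X : Polynomial ℂ)^(k+1) ∣ MvPolynomial.aeval α ψ) :
    (X : Polynomial ℂ)^(k+1) ∣ MvPolynomial.aeval β ψ := by
  have hconst : MvPolynomial.coeff 0 ψ = 0 := by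
    rw [← coeff0_aeval α hα ψ]
    exact Polynomial.X_pow_dvd_iff.mp hψ 0 (Nat.succ_pos k)
  have hsub : ψ = truncK k ψ + (ψ - truncK k ψ) := by ring
  have h1 : (X : Polynomial ℂ)^(k+1) ∣ MvPolynomial.aeval α (truncK k ψ) := by
    have := dvd_sub hψ (truncK_dvd hα ψ)
    rwa [← map_sub, sub_sub_cancel] at this
  have hmem : truncK k ψ ∈ solSpace k n α :=
    (mem_solSpace_iff hα _).mpr ⟨truncK_totalDegree ψ, by rw [truncK_coeff0]; exact hconst, h1⟩
  rw [hS] at hmem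
  have h2 := ((mem_solSpace_iff hβ _).mp hmem).2.2
  calc (X : Polynomial ℂ)^(k+1) ∣ MvPolynomial.aeval β (truncK k ψ)
      + MvPolynomial.aeval β (ψ - truncK k ψ) := dvd_add h2 (truncK_dvd hβ ψ)
    _ = MvPolynomial.aeval β ψ := by rw [← map_add]; congr 1; ring

lemma backward {k n : ℕ} (γ δ : Fin n → Polynomial ℂ)
    (hγ0 : ∀ j, (γ j).coeff 0 = 0) (hδ0 : ∀ j, (δ j).coeff 0 = 0)
    (φ : Polynomial ℂ) (h0 : φ.coeff 0 = 0) (h1 : φ.coeff 1 ≠ 0)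
    (hdvd : ∀ j, (X : Polynomial ℂ)^(k+1) ∣ (γ j - (δ j).comp φ)) :
    solSpace k n γ = solSpace k n δ := by
  have hθ0 : ∀ a ∈ Ik k, ((piQ k).comp (Polynomial.aeval φ)) a = 0 := by
    intro a ha
    rw [Ideal.mem_span_singleton] at ha
    obtain ⟨g, rfl⟩ := ha
    show piQ k (Polynomial.aeval φ (X^(k+1) * g)) = 0
    rw [map_mul, map_pow, Polynomial.aeval_X, piQ_eq_zero_iff]
    exact Dvd.dvd.mul_right (pow_dvd_pow_of_dvd (Polynomial.X_dvd_iff.mpr h0) _) _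
  set θ : Rk k →ₐ[ℂ] Rk k := Ideal.Quotient.liftₐ (Ik k) ((piQ k).comp (Polynomial.aeval φ)) hθ0 with hθdef
  have hθπ : ∀ p, θ (piQ k p) = piQ k (p.comp φ) := by
    intro p
    rw [← aeval_eq_comp]
    show θ (Ideal.Quotient.mk (Ik k) p) = _
    rw [hθdef, Ideal.Quotient.liftₐ_apply]
    rfl
  have hΦc : θ.comp (PhiA k n δ) = PhiA k n γ := by
    apply MvPolynomial.algHom_ext
    intro j
    show θ (piQ k (MvPolynomial.aeval δ (MvPolynomial.X j)))
      = piQ k (MvPolynomial.aeval γ (MvPolynomial.X j))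
    rw [MvPolynomial.aeval_X, MvPolynomial.aeval_X, hθπ, piQ_eq_iff]
    exact dvd_sub_comm.mp (hdvd j)
  have hΦ : ∀ ψ, θ (PhiA k n δ ψ) = PhiA k n γ ψ := fun ψ => by
    rw [← hΦc]; rfl
  ext ψ
  show ψ ∈ solSpace k n γ ↔ ψ ∈ solSpace k n δ
  rw [mem_solSpace_iff hγ0 ψ, mem_solSpace_iff hδ0 ψ]
  constructor
  · rintro ⟨a, b, c⟩
    refine ⟨a, b, ?_⟩
    have hγz : PhiA k n γ ψ = 0 := piQ_eq_zero_iff.mpr c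
    have hz : θ (piQ k (MvPolynomial.aeval δ ψ)) = 0 := by
      rw [show piQ k (MvPolynomial.aeval δ ψ) = PhiA k n δ ψ from rfl, hΦ]; exact hγz
    rw [hθπ, piQ_eq_zero_iff] at hz
    exact comp_dvd h0 h1 (k+1) _ hz
  · rintro ⟨a, b, c⟩
    refine ⟨a, b, ?_⟩
    have hδz : PhiA k n δ ψ = 0 := piQ_eq_zero_iff.mpr c
    have : PhiA k n γ ψ = 0 := by rw [← hΦ, hδz, map_zero]
    exact piQ_eq_zero_iff.mp this

lemma forward {k n : ℕ} (hk : 1 ≤ k) (γ δ : Fin n → Polynomial ℂ)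
    (hγ0 : ∀ j, (γ j).coeff 0 = 0) (hγreg : (fun j => (γ j).coeff 1) ≠ 0)
    (hδ0 : ∀ j, (δ j).coeff 0 = 0) (hδreg : (fun j => (δ j).coeff 1) ≠ 0)
    (hS : solSpace k n γ = solSpace k n δ) :
    ∃ φ : Polynomial ℂ, φ.natDegree ≤ k ∧ φ.coeff 0 = 0 ∧ φ.coeff 1 ≠ 0 ∧
      ∀ j, (X : Polynomial ℂ) ^ (k + 1) ∣ (γ j - (δ j).comp φ) := by
  have hker : ∀ a ∈ RingHom.ker (PhiA k n δ), PhiA k n γ a = 0 := by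
    intro a ha
    rw [RingHom.mem_ker] at ha
    have h1 : (X : Polynomial ℂ)^(k+1) ∣ MvPolynomial.aeval δ a := piQ_eq_zero_iff.mp ha
    exact piQ_eq_zero_iff.mpr (ker_transfer hδ0 hγ0 hS.symm a h1)
  have hδsurj : Function.Surjective (PhiA k n δ) := PhiA_surjective δ hδ0 hδreg
  have hγsurj : Function.Surjective (PhiA k n γ) := PhiA_surjective γ hγ0 hγreg
  set E := Ideal.quotientKerAlgEquivOfSurjective hδsurj with hEdef
  set L := Ideal.Quotient.liftₐ (RingHom.ker (PhiA k n δ)) (PhiA k n γ) hker with hLdef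
  set θ : Rk k →ₐ[ℂ] Rk k := L.comp (E.symm : Rk k →ₐ[ℂ] _) with hθdef
  have hθ : ∀ ψ, θ (PhiA k n δ ψ) = PhiA k n γ ψ := by
    intro ψ
    have hE : E (Ideal.Quotient.mk _ ψ) = PhiA k n δ ψ := rfl
    have hsym : E.symm (PhiA k n δ ψ) = Ideal.Quotient.mk _ ψ := by
      rw [← hE, AlgEquiv.symm_apply_apply]
    show L (E.symm (PhiA k n δ ψ)) = _
    rw [hsym, hLdef, Ideal.Quotient.liftₐ_apply]
    rfl
  obtain ⟨p, hp⟩ := Ideal.Quotient.mk_surjective (θ (piQ k X))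
  set φ := p %ₘ (X^(k+1)) with hφdef
  have hmono : ((X : Polynomial ℂ)^(k+1)).Monic := Polynomial.monic_X_pow _
  have hπφ : piQ k φ = θ (piQ k X) := by
    rw [← hp]
    show piQ k φ = piQ k p
    rw [piQ_eq_iff]
    exact ⟨-(p /ₘ X^(k+1)), by linear_combination (Polynomial.modByMonic_add_div p (X^(k+1)))⟩
  have hdeg : φ.natDegree ≤ k := by
    by_cases hφ0 : φ = 0
    · simp [hφ0]
    · have h := Polynomial.degree_modByMonic_lt p hmono
      rw [Polynomial.degree_X_pow] at h
      have := (Polynomial.natDegree_lt_iff_degree_lt hφ0).mpr (hφdef ▸ h)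
      omega
  have hcompθ : θ.comp (piQ k) = (piQ k).comp (Polynomial.aeval φ) := by
    apply Polynomial.algHom_ext
    show θ (piQ k X) = piQ k (Polynomial.aeval φ X)
    rw [Polynomial.aeval_X, hπφ]
  have hθcomp : ∀ q : Polynomial ℂ, θ (piQ k q) = piQ k (q.comp φ) := by
    intro q
    have := congrArg (fun f => f q) hcompθ
    simpa [aeval_eq_comp] using this
  have h0 : φ.coeff 0 = 0 := by
    have hφpow : piQ k (φ^(k+1)) = 0 := by
      rw [map_pow, hπφ, ← map_pow θ, ← map_pow (piQ k),
        piQ_eq_zero_iff.mpr (dvd_refl ((X:Polynomial ℂ)^(k+1))), map_zero]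
    have hXdvd : (X : Polynomial ℂ) ∣ φ^(k+1) :=
      dvd_trans (dvd_pow_self X (Nat.succ_ne_zero k)) (piQ_eq_zero_iff.mp hφpow)
    have hc := Polynomial.X_dvd_iff.mp hXdvd
    rw [coeff0_pow] at hc
    exact pow_eq_zero_iff (Nat.succ_ne_zero k) |>.mp hc
  have h1 : φ.coeff 1 ≠ 0 := by
    intro hc1
    have hX2 : (X : Polynomial ℂ)^2 ∣ φ := Polynomial.X_pow_dvd_iff.mpr (by
      intro d hd; interval_cases d; exacts [h0, hc1])
    have hθsurj : Function.Surjective θ := fun r => by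
      obtain ⟨ψ, hψ⟩ := hγsurj r; exact ⟨PhiA k n δ ψ, by rw [hθ, hψ]⟩
    obtain ⟨x, hx⟩ := hθsurj (piQ k X)
    obtain ⟨p', rfl⟩ := Ideal.Quotient.mk_surjective x
    have hx' : piQ k (p'.comp φ) = piQ k X := by
      rw [← hθcomp]; exact hx
    have hdvd := piQ_eq_iff.mp hx'
    have hco : (p'.comp φ - X).coeff 1 = 0 :=
      Polynomial.X_pow_dvd_iff.mp hdvd 1 (by omega)
    obtain ⟨r, hrr⟩ := Polynomial.X_dvd_iff.mpr
      (show (p' - Polynomial.C (p'.coeff 0)).coeff 0 = 0 by simp)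
    have hp' : p' = Polynomial.C (p'.coeff 0) + X * r := by linear_combination hrr
    have hcomp1 : (p'.comp φ).coeff 1 = 0 := by
      rw [hp', Polynomial.add_comp, Polynomial.C_comp, Polynomial.mul_comp, Polynomial.X_comp,
        Polynomial.coeff_add, Polynomial.coeff_C]
      obtain ⟨s, hs⟩ := hX2
      have hdd : (X : Polynomial ℂ)^2 ∣ φ * r.comp φ := ⟨s * r.comp φ, by rw [hs]; ring⟩
      rw [Polynomial.X_pow_dvd_iff.mp hdd 1 (by omega)]
      simp
    rw [Polynomial.coeff_sub, hcomp1, Polynomial.coeff_X_one] at hco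
    norm_num at hco
  refine ⟨φ, hdeg, h0, h1, fun j => ?_⟩
  have : piQ k (γ j) = piQ k ((δ j).comp φ) := by
    have h1' : PhiA k n γ (MvPolynomial.X j) = piQ k (γ j) := by
      show piQ k (MvPolynomial.aeval γ (MvPolynomial.X j)) = _
      rw [MvPolynomial.aeval_X]
    have h2' : PhiA k n δ (MvPolynomial.X j) = piQ k (δ j) := by
      show piQ k (MvPolynomial.aeval δ (MvPolynomial.X j)) = _
      rw [MvPolynomial.aeval_X]
    rw [← h1', ← hθ, h2', hθcomp]
  exact piQ_eq_iff.mp this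

/-- For regular `k`-jets `γ, δ` of curves in `ℂ^n`, the solution spaces `S_γ` and `S_δ`
coincide if and only if `γ = δ∘φ` modulo `t^{k+1}` for some `φ ∈ Diff_k(1)`: the test curve
map is `Diff_k(1)`-invariant and injective on `Diff_k(1)`-orbits. -/
theorem stmt14 (k n : ℕ) (hk : 1 ≤ k)
    (γ δ : Fin n → Polynomial ℂ)
    (hγdeg : ∀ j, (γ j).natDegree ≤ k) (hγ0 : ∀ j, (γ j).coeff 0 = 0)
    (hγreg : (fun j => (γ j).coeff 1) ≠ 0)
    (hδdeg : ∀ j, (δ j).natDegree ≤ k) (hδ0 : ∀ j, (δ j).coeff 0 = 0)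
    (hδreg : (fun j => (δ j).coeff 1) ≠ 0) :
    solSpace k n γ = solSpace k n δ ↔
      ∃ φ : Polynomial ℂ, φ.natDegree ≤ k ∧ φ.coeff 0 = 0 ∧ φ.coeff 1 ≠ 0 ∧
        ∀ j, (Polynomial.X : Polynomial ℂ) ^ (k + 1) ∣ (γ j - (δ j).comp φ) := by
  constructor
  · intro hS
    exact forward hk γ δ hγ0 hγreg hδ0 hδreg hS
  · rintro ⟨φ, hdeg, h0, h1, hdvd⟩
    exact backward γ δ hγ0 hδ0 φ h0 h1 hdvd

end Stmt14Aux
end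

section
/- Let A be a finite-dimensional local commutative unital ℂ-algebra with maximal ideal m and dim_ℂ A = k ≥ 1. Then A is isomorphic as a ℂ-algebra to ℂ[t]/(t^k) if and only if m^{k−1} ≠ 0. (Equivalently: a length-k subscheme ξ supported at the origin of ℂ^n, with ideal I ⊆ (x_1,…,x_n), is non-curvilinear if and only if I ⊇ (x_1,…,x_n)^{k−1}; in particular non-curvilinearity is a closed condition.) -/
/-!
Over a field `K`, the dimensions of the `K`-subspaces `𝔪 ^ i` of an `n`-dimensional local algebra
drop strictly until they reach `0` (Nakayama), so `𝔪 ^ (n - 1) ≠ 0` forces `dim 𝔪 ^ i = n - i`.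
Hence `𝔪 / 𝔪 ^ 2` is a line and `𝔪 = (x)` by Nakayama; then `x ^ n = 0 ≠ x ^ (n - 1)`, so `X ^ n`
is the minimal polynomial of `x` and, comparing dimensions, `K[X]/(X ^ n) → A`, `X ↦ x` is an
isomorphism. Conversely, the class of `X` in `K[X]/(X ^ n)` is nilpotent, hence in `𝔪`, and its
`(n - 1)`-st power is nonzero.
-/

open Polynomial IsLocalRing Module

section NoetherianLocalRing

variable {R : Type*} [CommRing R] [IsLocalRing R]

theorem IsLocalRing.maximalIdeal_pow_ne_bot_of_isNilpotent {x : R} (hx : IsNilpotent x) {n : ℕ}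
    (hxn : x ^ n ≠ 0) : maximalIdeal R ^ n ≠ ⊥ := fun h =>
  hxn <| (Submodule.mem_bot R).1 <| h ▸ Ideal.pow_mem_pow ((mem_maximalIdeal x).2 hx.not_isUnit) n

variable [IsNoetherianRing R]

theorem IsLocalRing.maximalIdeal_pow_succ_lt {i : ℕ} (h : maximalIdeal R ^ i ≠ ⊥) :
    maximalIdeal R ^ (i + 1) < maximalIdeal R ^ i := by
  refine (Ideal.pow_le_pow_right i.le_succ).lt_of_ne fun heq => h ?_
  refine Submodule.eq_bot_of_le_smul_of_le_jacobson_bot _ _ (IsNoetherian.noetherian _) ?_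
    (maximalIdeal_le_jacobson ⊥)
  rw [smul_eq_mul, ← pow_succ', heq]

theorem IsLocalRing.maximalIdeal_le_span_singleton_of_le_sup_sq {x : R}
    (h : maximalIdeal R ≤ Ideal.span {x} ⊔ maximalIdeal R ^ 2) :
    maximalIdeal R ≤ Ideal.span {x} :=
  Submodule.le_of_le_smul_of_le_jacobson_bot (IsNoetherian.noetherian _)
    (maximalIdeal_le_jacobson ⊥) (by rwa [smul_eq_mul, ← sq])

end NoetherianLocalRing

theorem Submodule.exists_le_sup_span_singleton {K V : Type*} [DivisionRing K] [AddCommGroup V]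
    [Module K V] {W U : Submodule K V} [FiniteDimensional K U] (hWU : W ≤ U)
    (h : finrank K U ≤ finrank K W + 1) : ∃ x ∈ U, U ≤ W ⊔ K ∙ x := by
  by_cases hUW : U ≤ W
  · exact ⟨0, U.zero_mem, hUW.trans le_sup_left⟩
  obtain ⟨x, hxU, hxW⟩ := Set.not_subset.1 hUW
  have hle : W ⊔ K ∙ x ≤ U := sup_le hWU ((span_singleton_le_iff_mem _ _).2 hxU)
  have hlt : W < W ⊔ K ∙ x := left_lt_sup.2 (by rwa [span_singleton_le_iff_mem])
  have : FiniteDimensional K ↥(W ⊔ K ∙ x) := Submodule.finiteDimensional_of_le hle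
  refine ⟨x, hxU, (eq_of_le_of_finrank_le hle ?_).ge⟩
  have := finrank_lt_finrank_of_lt hlt
  omega

theorem minpoly_eq_X_pow_of_pow_eq_zero {K A : Type*} [Field K] [Ring A] [Algebra K A] {x : A}
    {n : ℕ} (hxn : x ^ n = 0) (hxn' : x ^ (n - 1) ≠ 0) : minpoly K x = X ^ n := by
  have hx_int : IsIntegral K x := ⟨X ^ n, monic_X_pow n, by simp [hxn]⟩
  obtain ⟨i, hin, hassoc⟩ := (dvd_prime_pow prime_X n).1 (minpoly.dvd K x (by simp [hxn]))
  have hmin : minpoly K x = X ^ i :=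
    eq_of_monic_of_associated (minpoly.monic hx_int) (monic_X_pow i) hassoc
  obtain rfl : i = n := by
    refine hin.antisymm (Nat.le_of_pred_lt (lt_of_not_ge fun hi => hxn' ?_))
    exact pow_eq_zero_of_le hi (by simpa [hmin] using minpoly.aeval K x)
  exact hmin

theorem AdjoinRoot.nonempty_algEquiv_of_minpoly_eq {K A : Type*} [Field K] [CommRing A]
    [Algebra K A] [FiniteDimensional K A] {x : A} {p : K[X]} (hp : minpoly K x = p)
    (hA : finrank K A = p.natDegree) : Nonempty (AdjoinRoot p ≃ₐ[K] A) := by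
  subst hp
  set φ := liftAlgHom (minpoly K x) (Algebra.ofId K A) x (minpoly.aeval K x)
  have hinj : Function.Injective φ := by
    refine (injective_iff_map_eq_zero φ).2 fun y hy => ?_
    induction y using AdjoinRoot.induction_on with | ih q => ?_
    exact mk_eq_zero.2 (minpoly.dvd K x hy)
  have hp0 : minpoly K x ≠ 0 := minpoly.ne_zero (Algebra.IsIntegral.isIntegral x)
  have : FiniteDimensional K (AdjoinRoot (minpoly K x)) := (powerBasis hp0).finite
  have hdim : finrank K (AdjoinRoot (minpoly K x)) = finrank K A := by
    rw [(powerBasis hp0).finrank, powerBasis_dim, hA]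
  have hsurj : Function.Surjective φ :=
    (LinearMap.injective_iff_surjective_of_finrank_eq_finrank hdim (f := φ.toLinearMap)).1 hinj
  exact ⟨AlgEquiv.ofBijective φ ⟨hinj, hsurj⟩⟩

namespace IsLocalRing

variable (K : Type*) {A : Type*} [Field K] [CommRing A] [Algebra K A] [FiniteDimensional K A]
  [IsLocalRing A]

theorem finrank_maximalIdeal_pow_succ_lt {i : ℕ} (h : maximalIdeal A ^ i ≠ ⊥) :
    finrank K ((maximalIdeal A ^ (i + 1)).restrictScalars K) <
      finrank K ((maximalIdeal A ^ i).restrictScalars K) :=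
  have : IsNoetherianRing A := isNoetherian_of_tower K inferInstance
  Submodule.finrank_lt_finrank_of_lt
    ((Submodule.restrictScalars_lt K).2 (maximalIdeal_pow_succ_lt h))

theorem finrank_maximalIdeal_pow_le (i : ℕ) :
    finrank K ((maximalIdeal A ^ i).restrictScalars K) ≤ finrank K A - i := by
  induction i with
  | zero => simpa using Submodule.finrank_le _
  | succ i ih =>
    by_cases h : maximalIdeal A ^ i = ⊥
    · rw [pow_succ, h, Ideal.bot_mul, Submodule.restrictScalars_bot, finrank_bot]
      exact Nat.zero_le _
    · have := finrank_maximalIdeal_pow_succ_lt K h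
      omega

theorem maximalIdeal_pow_finrank_eq_bot : maximalIdeal A ^ finrank K A = ⊥ := by
  have := finrank_maximalIdeal_pow_le K (A := A) (finrank K A)
  rwa [Nat.sub_self, Nat.le_zero, Submodule.finrank_eq_zero,
    Submodule.restrictScalars_eq_bot_iff] at this

theorem finrank_maximalIdeal_pow_add_le {i j : ℕ} (h : maximalIdeal A ^ (i + j) ≠ ⊥) :
    finrank K ((maximalIdeal A ^ (i + j)).restrictScalars K) + j ≤
      finrank K ((maximalIdeal A ^ i).restrictScalars K) := by
  induction j with
  | zero => simp
  | succ j ih =>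
    have hne : maximalIdeal A ^ (i + j) ≠ ⊥ := fun h' =>
      h (le_bot_iff.1 (h' ▸ Ideal.pow_le_pow_right (by omega)))
    have := finrank_maximalIdeal_pow_succ_lt K hne
    have := ih hne
    rw [← add_assoc i j 1]
    omega

theorem sub_le_finrank_maximalIdeal_pow (h : maximalIdeal A ^ (finrank K A - 1) ≠ ⊥) (i : ℕ) :
    finrank K A - i ≤ finrank K ((maximalIdeal A ^ i).restrictScalars K) := by
  rcases le_or_gt (finrank K A) i with hi | hi
  · omega
  have hpos : 0 < finrank K ((maximalIdeal A ^ (finrank K A - 1)).restrictScalars K) := by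
    rwa [Nat.pos_iff_ne_zero, Ne, Submodule.finrank_eq_zero, Submodule.restrictScalars_eq_bot_iff]
  have := finrank_maximalIdeal_pow_add_le K (i := i) (j := finrank K A - 1 - i)
    (by rwa [Nat.add_sub_cancel' (by omega)])
  rw [Nat.add_sub_cancel' (by omega)] at this
  omega

theorem exists_maximalIdeal_eq_span_singleton (h : maximalIdeal A ^ (finrank K A - 1) ≠ ⊥) :
    ∃ x, maximalIdeal A = Ideal.span {x} := by
  have : IsNoetherianRing A := isNoetherian_of_tower K inferInstance
  have hn : 0 < finrank K A := finrank_pos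
  have h1 := finrank_maximalIdeal_pow_le K (A := A) 1
  have h2 := sub_le_finrank_maximalIdeal_pow K h 2
  rw [pow_one] at h1
  obtain ⟨x, hxm, hle⟩ := Submodule.exists_le_sup_span_singleton
    (Submodule.restrictScalars_mono K (Ideal.pow_le_self (I := maximalIdeal A) two_ne_zero))
    (by omega)
  refine ⟨x, (maximalIdeal_le_span_singleton_of_le_sup_sq fun y hy => ?_).antisymm
    ((Ideal.span_singleton_le_iff_mem _).2 hxm)⟩
  refine (sup_le (Submodule.restrictScalars_mono K le_sup_right) ?_ : _ ≤
    (Ideal.span {x} ⊔ maximalIdeal A ^ 2).restrictScalars K) (hle hy)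
  exact (Submodule.span_singleton_le_iff_mem _ _).2
    (Ideal.mem_sup_left (Ideal.mem_span_singleton_self x))

theorem nonempty_algEquiv_adjoinRoot_X_pow_iff :
    Nonempty (A ≃ₐ[K] AdjoinRoot (X ^ finrank K A : K[X])) ↔
      maximalIdeal A ^ (finrank K A - 1) ≠ ⊥ := by
  set n := finrank K A
  constructor
  · rintro ⟨e⟩
    have hn : 0 < n := finrank_pos
    have hroot : IsNilpotent (AdjoinRoot.root (X ^ n : K[X])) :=
      ⟨n, by rw [← AdjoinRoot.mk_X, ← map_pow, AdjoinRoot.mk_self]⟩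
    refine maximalIdeal_pow_ne_bot_of_isNilpotent (hroot.map e.symm) ?_
    rw [← map_pow, map_ne_zero_iff _ e.symm.injective, ← AdjoinRoot.mk_X, ← map_pow, Ne,
      AdjoinRoot.mk_eq_zero, pow_dvd_pow_iff X_ne_zero not_isUnit_X]
    omega
  · intro h
    obtain ⟨x, hx⟩ := exists_maximalIdeal_eq_span_singleton K h
    have hpow (i : ℕ) : maximalIdeal A ^ i = Ideal.span {x ^ i} := by
      rw [hx, Ideal.span_singleton_pow]
    have hxn : x ^ n = 0 := by
      simpa [hpow] using maximalIdeal_pow_finrank_eq_bot K (A := A)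
    have hxn' : x ^ (n - 1) ≠ 0 := by simpa [hpow] using h
    obtain ⟨e⟩ := AdjoinRoot.nonempty_algEquiv_of_minpoly_eq
      (minpoly_eq_X_pow_of_pow_eq_zero hxn hxn') (natDegree_X_pow n).symm
    exact ⟨e.symm⟩

end IsLocalRing

theorem stmt16_general (k : ℕ) (A : Type) [CommRing A] [Algebra ℂ A]
    [IsLocalRing A] [FiniteDimensional ℂ A] (hA : Module.finrank ℂ A = k) :
    Nonempty (A ≃ₐ[ℂ] (Polynomial ℂ ⧸ Ideal.span {(Polynomial.X : Polynomial ℂ) ^ k})) ↔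
      (IsLocalRing.maximalIdeal A) ^ (k - 1) ≠ ⊥ := by
  subst hA
  exact nonempty_algEquiv_adjoinRoot_X_pow_iff ℂ

/-- A finite-dimensional local commutative unital `ℂ`-algebra `A` of dimension `k ≥ 1`, with
maximal ideal `m`, is isomorphic to `ℂ[t]/(t^k)` (i.e. is curvilinear) if and only if
`m^{k-1} ≠ 0`. -/
theorem stmt16 (k : ℕ) (hk : 1 ≤ k) (A : Type) [CommRing A] [Algebra ℂ A]
    [IsLocalRing A] [FiniteDimensional ℂ A] (hA : Module.finrank ℂ A = k) :
    Nonempty (A ≃ₐ[ℂ] (Polynomial ℂ ⧸ Ideal.span {(Polynomial.X : Polynomial ℂ) ^ k})) ↔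
      (IsLocalRing.maximalIdeal A) ^ (k - 1) ≠ ⊥ :=
  stmt16_general k A hA
end
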